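/- Take R = ℤ/2ℤ and let 3 < k ≤ n. Then Σ_{j=0}^{k−2}(1^{⊗j} ⊗ Δ_2 ⊗ 1^{⊗(k−2−j)})(Δ_{k−1}(P)) equals the sum, each summand with coefficient 1, of exactly the admissible basis tensors of C^{⊗k} that are singly attached (in particular, every doubly attached term cancels and no unattached term occurs). -/

import Mathlib

noncomputable section

/-- Cells of an `n`-gon: `v i` models the vertex `v_{i+1}`, `e i` models the edge `e_{i+1}`
(so indices are 0-based), and `F` models the 2-cell `P`. -/
inductive Cell (n : ℕ) : Type where
  | v : Fin n → Cell n
  | e : Fin n → Cell n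
  | F : Cell n
deriving DecidableEq

/-- `Tens R n k` models `C^{⊗ k}`, the free `R`-module on `k`-tuples of cells. -/
abbrev Tens (R : Type) [CommRing R] (n k : ℕ) : Type := (Fin k → Cell n) →₀ R

/-- The basis tensor corresponding to a tuple of cells. -/
def bt (R : Type) [CommRing R] {n k : ℕ} (x : Fin k → Cell n) : Tens R n k :=
  Finsupp.single x 1

/-- Degree of a cell. -/
def degC {n : ℕ} : Cell n → ℕ
  | .v _ => 0
  | .e _ => 1
  | .F => 2

/-- `(-1)^m` in `R`. -/
def sgn (R : Type) [CommRing R] (m : ℤ) : R := if Even m then 1 else -1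

/-- The boundary operator on basis cells: `∂(v_i) = 0`, `∂(e_i) = v_{i+1} - v_i` for `i < n`,
`∂(e_n) = v_n - v_1`, `∂(P) = e_1 + ⋯ + e_{n-1} - e_n`. -/
def dB (R : Type) [CommRing R] (n : ℕ) : Cell n → Tens R n 1
  | .v _ => 0
  | .e i =>
      if h : (i : ℕ) + 1 < n then
        bt R (fun _ => Cell.v ⟨(i : ℕ) + 1, h⟩) - bt R (fun _ => Cell.v i)
      else
        bt R (fun _ => Cell.v i) - bt R (fun _ => Cell.v ⟨0, i.pos⟩)
  | .F => ∑ i : Fin n, (if (i : ℕ) + 1 < n then (1 : R) else -1) • bt R (fun _ => Cell.e i)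

/-- `Σ_{0<i_1<⋯<i_k<n} e_{i_1} ⊗ ⋯ ⊗ e_{i_k}` (with 0-based indices: strictly increasing
tuples of edge indices all `< n-1`). -/
def esum (R : Type) [CommRing R] (n k : ℕ) : Tens R n k :=
  ∑ f : Fin k → Fin n,
    if (∀ p q : Fin k, p < q → f p < f q) ∧ (∀ p : Fin k, ((f p) : ℕ) + 1 < n) then
      bt R (fun p => Cell.e (f p))
    else 0

/-- The `A_∞`-coalgebra operations on basis cells: `DeltaB R n 2` is the Kravatz diagonal
`Δ₂` and for `k ≥ 3`, `DeltaB R n k` is `Δ_k`, which vanishes on vertices and edges and sends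
`P` to `Σ_{0<i_1<⋯<i_k<n} e_{i_1} ⊗ ⋯ ⊗ e_{i_k}`. -/
def DeltaB (R : Type) [CommRing R] (n : ℕ) (k : ℕ) : Cell n → Tens R n k
  | .v i => if k = 2 then bt R (fun _ => Cell.v i) else 0
  | .e i =>
      if k = 2 then
        if h : (i : ℕ) + 1 < n then
          bt R (fun p => if (p : ℕ) = 0 then Cell.v i else Cell.e i) +
            bt R (fun p => if (p : ℕ) = 0 then Cell.e i else Cell.v ⟨(i : ℕ) + 1, h⟩)
        else
          bt R (fun p => if (p : ℕ) = 0 then Cell.v ⟨0, i.pos⟩ else Cell.e i) +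
            bt R (fun p => if (p : ℕ) = 0 then Cell.e i else Cell.v i)
      else 0
  | .F =>
      esum R n k +
        (if h : k = 2 ∧ 0 < n then
          bt R (fun p => if (p : ℕ) = 0 then Cell.v ⟨0, h.2⟩ else Cell.F) +
            bt R (fun p => if (p : ℕ) = 0 then Cell.F
                  else Cell.v ⟨n - 1, Nat.sub_lt h.2 Nat.one_pos⟩)
        else 0)

/-- Extension of a map defined on basis tensors to a linear map. -/
def lext (R : Type) [CommRing R] (n : ℕ) {k m : ℕ} (φ : (Fin k → Cell n) → Tens R n m) :
    Tens R n k →ₗ[R] Tens R n m :=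
  Finsupp.linearCombination R φ

/-- Splicing a `j`-tuple into a `k`-tuple at position `a`, producing an `m`-tuple
(meaningful when `m = k + j - 1` and `a < k`). -/
def splice {n k j : ℕ} (m a : ℕ) (x : Fin k → Cell n) (y : Fin j → Cell n) :
    Fin m → Cell n := fun q =>
  if h1 : (q : ℕ) < a ∧ (q : ℕ) < k then x ⟨q, h1.2⟩
  else if h2 : a ≤ (q : ℕ) ∧ (q : ℕ) - a < j then y ⟨(q : ℕ) - a, h2.2⟩
  else if h3 : (q : ℕ) + 1 - j < k then x ⟨(q : ℕ) + 1 - j, h3⟩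
  else Cell.F

/-- `opp R n k m j a p g` is the linear map `1^{⊗a} ⊗ g ⊗ 1^{⊗(k-1-a)} : C^{⊗k} → C^{⊗m}`
(meaningful when `m = k + j - 1`), where `g` is the basis-level description of an operation
`C → C^{⊗j}` of degree `p`, evaluated with the Koszul sign convention. -/
def opp (R : Type) [CommRing R] (n : ℕ) (k m j a : ℕ) (p : ℤ) (g : Cell n → Tens R n j) :
    Tens R n k →ₗ[R] Tens R n m :=
  lext R n fun x =>
    if ha : a < k then
      sgn R (p * ∑ q : Fin k, if (q : ℕ) < a then (degC (x q) : ℤ) else 0) •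
        Finsupp.mapDomain (splice m a x) (g (x ⟨a, ha⟩))
    else 0

/-- `Δ_k` as a linear map `C → C^{⊗k}`. -/
def Dmap (R : Type) [CommRing R] (n k : ℕ) : Tens R n 1 →ₗ[R] Tens R n k :=
  lext R n fun x => DeltaB R n k (x 0)

/-- The boundary `∂` as a linear map `C → C`. -/
def bdry (R : Type) [CommRing R] (n : ℕ) : Tens R n 1 →ₗ[R] Tens R n 1 :=
  lext R n fun x => dB R n (x 0)

/-- The top cell `P` as a chain. -/
def cellP (R : Type) [CommRing R] (n : ℕ) : Tens R n 1 := bt R (fun _ => Cell.F)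

end

/-- A basis tensor `x` is admissible with vertex `v_m` (0-based index `m`) in position `p`:
`x p = v_m`, all other factors are edges `e_i` with `i + 1 < n` (1-based index `< n`) in
strictly increasing index order, the edge immediately to the left of `v_m` (if any) has
1-based index `< m` and that immediately to the right (if any) has 1-based index `≥ m`. -/
def Adm {n k : ℕ} (x : Fin k → Cell n) (p : Fin k) (m : Fin n) : Prop :=
  x p = Cell.v m ∧
  (∀ q : Fin k, q ≠ p → ∃ i : Fin n, x q = Cell.e i ∧ (i : ℕ) + 1 < n) ∧
  (∀ q r : Fin k, q < r → q ≠ p → r ≠ p →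
    ∀ i j : Fin n, x q = Cell.e i → x r = Cell.e j → i < j) ∧
  (∀ (_ : 0 < (p : ℕ)) (i : Fin n),
    x ⟨(p : ℕ) - 1, by have := p.isLt; omega⟩ = Cell.e i → i < m) ∧
  (∀ (h : (p : ℕ) + 1 < k) (j : Fin n), x ⟨(p : ℕ) + 1, h⟩ = Cell.e j → m ≤ j)

/-- `x` is left attached: the factor immediately to the left of the vertex `v_m` is `e_{m-1}`
(1-based; 0-based this is the edge of index `m - 1` to the left of the vertex of index `m`). -/
def LeftAtt {n k : ℕ} (x : Fin k → Cell n) (p : Fin k) (m : Fin n) : Prop :=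
  ∃ _ : 0 < (p : ℕ), ∃ _ : 0 < (m : ℕ),
    x ⟨(p : ℕ) - 1, by have := p.isLt; omega⟩ =
      Cell.e ⟨(m : ℕ) - 1, by have := m.isLt; omega⟩

/-- `x` is right attached: the factor immediately to the right of the vertex `v_m` is `e_m`. -/
def RightAtt {n k : ℕ} (x : Fin k → Cell n) (p : Fin k) (m : Fin n) : Prop :=
  ∃ h : (p : ℕ) + 1 < k, x ⟨(p : ℕ) + 1, h⟩ = Cell.e m

/-- `x` is singly attached: left attached or right attached but not both. -/
def SinglyAtt {n k : ℕ} (x : Fin k → Cell n) (p : Fin k) (m : Fin n) : Prop :=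
  (LeftAtt x p m ∧ ¬ RightAtt x p m) ∨ (¬ LeftAtt x p m ∧ RightAtt x p m)

/-- `x` is unattached: neither left attached nor right attached. -/
def Unatt {n k : ℕ} (x : Fin k → Cell n) (p : Fin k) (m : Fin n) : Prop :=
  ¬ LeftAtt x p m ∧ ¬ RightAtt x p m

/-- `x` is minimally extreme: its first factor is `v₁` (0-based: the vertex of index 0). -/
def MinExt {n k : ℕ} (x : Fin k → Cell n) : Prop :=
  ∃ (h : 0 < k) (h0 : 0 < n), x ⟨0, h⟩ = Cell.v ⟨0, h0⟩

/-- `x` is maximally extreme: its last factor is `v_n`. -/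
def MaxExt {n k : ℕ} (x : Fin k → Cell n) : Prop :=
  ∃ (h : 0 < k) (h0 : 0 < n), x ⟨k - 1, by omega⟩ = Cell.v ⟨n - 1, by omega⟩

/-!
Since `k - 1 ≠ 2`, `Δ_{k-1}(P)` is the sum of the tensors `e_f = e_{f 0} ⊗ ⋯ ⊗ e_{f (k-2)}`
over increasing tuples `f` of edge indices `< n - 1`, and `(1^{⊗j} ⊗ Δ₂ ⊗ 1^{⊗(k-2-j)})(e_f)` is
`e_f` with the vertex `v_{f j}` inserted just before `e_{f j}` plus `e_f` with the vertex
`v_{f j + 1}` inserted just after it. Terms of the first kind are exactly the admissible right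
attached tensors, terms of the second kind exactly the admissible left attached ones, and a tensor
determines the pair `(j, f)` it comes from (the vertex position and the remaining edges). Modulo 2
the coefficient of `x` is therefore `[x right attached] + [x left attached]`, which is `1` exactly
when `x` is singly attached, because the position and label of the vertex of an admissible tensor
are unique.
-/

theorem Fintype.sum_boole_eq_ite_exists {α M : Type*} [Fintype α]
    [AddCommMonoidWithOne M] {P : α → Prop} [DecidablePred P] [Decidable (∃ a, P a)]
    (h : ∀ a b, P a → P b → a = b) :
    ∑ a, (if P a then (1 : M) else 0) = if ∃ a, P a then 1 else 0 := by
  split_ifs with hex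
  · obtain ⟨a, ha⟩ := hex
    rw [Fintype.sum_eq_single a fun b hb => if_neg fun hPb => hb (h b a hPb ha), if_pos ha]
  · exact Finset.sum_eq_zero fun a _ => if_neg fun ha => hex ⟨a, ha⟩

theorem Function.Injective2.sum_sum_boole_eq_ite_exists {α β γ M : Type*} [Fintype α]
    [Fintype β] [AddCommMonoidWithOne M] [DecidableEq γ] {g : α → β → γ}
    (hg : Function.Injective2 g) (c : γ) [Decidable (∃ a b, g a b = c)] :
    ∑ a, ∑ b, (if g a b = c then (1 : M) else 0) = if ∃ a b, g a b = c then 1 else 0 := by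
  rw [← Fintype.sum_prod_type', Fintype.sum_boole_eq_ite_exists]
  · simp only [Prod.exists]
  · rintro ⟨a, b⟩ ⟨a', b'⟩ h h'
    obtain ⟨rfl, rfl⟩ := hg (h.trans h'.symm)
    rfl

theorem ZMod.boole_add_boole_eq_one_iff (P Q : Prop) [Decidable P] [Decidable Q] :
    ((if P then 1 else 0) + (if Q then 1 else 0) : ZMod 2) = 1 ↔ Xor P Q := by
  by_cases hP : P <;> by_cases hQ : Q <;> simp [hP, hQ, Xor]

section Polygon

variable {n k : ℕ}

def insVertex (p : Fin (k + 1)) (m : Fin n) (f : Fin k → Fin n) : Fin (k + 1) → Cell n :=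
  Fin.insertNth p (Cell.v m) fun i => Cell.e (f i)

@[simp]
theorem insVertex_apply_same (p : Fin (k + 1)) (m : Fin n) (f : Fin k → Fin n) :
    insVertex p m f p = Cell.v m :=
  Fin.insertNth_apply_same _ _ _

@[simp]
theorem insVertex_apply_succAbove (p : Fin (k + 1)) (m : Fin n) (f : Fin k → Fin n)
    (i : Fin k) : insVertex p m f (p.succAbove i) = Cell.e (f i) :=
  Fin.insertNth_apply_succAbove _ _ _ _

theorem insVertex_inj {p p' : Fin (k + 1)} {m m' : Fin n} {f f' : Fin k → Fin n} :
    insVertex p m f = insVertex p' m' f' ↔ p = p' ∧ m = m' ∧ f = f' := by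
  refine ⟨fun h => ?_, by rintro ⟨rfl, rfl, rfl⟩; rfl⟩
  obtain rfl : p = p' := by
    by_contra hne
    obtain ⟨i, rfl⟩ := Fin.exists_succAbove_eq hne
    simpa using congrFun h (p'.succAbove i)
  rw [insVertex, insVertex, Fin.insertNth_inj] at h
  simp only [Cell.v.injEq, funext_iff, Cell.e.injEq] at h
  exact ⟨rfl, h.1, funext h.2⟩

theorem insVertex_apply_pred (p : Fin (k + 1)) (m : Fin n) (f : Fin k → Fin n)
    (hp : 0 < (p : ℕ)) :
    insVertex p m f ⟨p - 1, by omega⟩ = Cell.e (f ⟨p - 1, by omega⟩) := by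
  rw [← insVertex_apply_succAbove p m f, Fin.succAbove_of_castSucc_lt]
  · rfl
  · show (p : ℕ) - 1 < p
    omega

theorem insVertex_apply_succ (p : Fin (k + 1)) (m : Fin n) (f : Fin k → Fin n)
    (hp : (p : ℕ) + 1 < k + 1) :
    insVertex p m f ⟨p + 1, hp⟩ = Cell.e (f ⟨p, by omega⟩) := by
  rw [← insVertex_apply_succAbove p m f, Fin.succAbove_of_le_castSucc]
  · rfl
  · exact le_rfl

theorem Adm.exists_eq_insVertex {x : Fin (k + 1) → Cell n} {p : Fin (k + 1)} {m : Fin n}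
    (h : Adm x p m) : ∃ f, x = insVertex p m f := by
  choose f hf using fun i => h.2.1 (p.succAbove i) (p.succAbove_ne i)
  exact ⟨f, Fin.eq_insertNth_iff.2 ⟨h.1, funext fun i => (hf i).1⟩⟩

theorem adm_insVertex_iff {p : Fin (k + 1)} {m : Fin n} {f : Fin k → Fin n} :
    Adm (insVertex p m f) p m ↔
      (∀ i, (f i : ℕ) + 1 < n) ∧ StrictMono f ∧
        (∀ hp : 0 < (p : ℕ), f ⟨p - 1, by omega⟩ < m) ∧
        (∀ hp : (p : ℕ) < k, m ≤ f ⟨p, hp⟩) := by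
  simp only [Adm, insVertex_apply_same, true_and]
  refine and_congr ?_ (and_congr ?_ (and_congr ?_ ?_))
  · simp [Fin.forall_iff_succAbove p, Fin.succAbove_ne]
  · simp [Fin.forall_iff_succAbove p, Fin.succAbove_ne, Fin.succAbove_lt_succAbove_iff,
      StrictMono]
  · refine forall_congr' fun hp => ?_
    simp [insVertex_apply_pred _ _ _ hp]
  · refine ⟨fun h hp => h (by omega) _ (insVertex_apply_succ ..), fun h hp j hj => ?_⟩
    rw [insVertex_apply_succ, Cell.e.injEq] at hj
    exact hj ▸ h (by omega)

theorem leftAtt_insVertex_iff {p : Fin (k + 1)} {m : Fin n} {f : Fin k → Fin n} :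
    LeftAtt (insVertex p m f) p m ↔ ∃ hp : 0 < (p : ℕ), (f ⟨p - 1, by omega⟩ : ℕ) + 1 = m := by
  refine ⟨fun ⟨hp, hm, h⟩ => ⟨hp, ?_⟩, fun ⟨hp, h⟩ => ⟨hp, by omega, ?_⟩⟩
  · rw [insVertex_apply_pred _ _ _ hp, Cell.e.injEq, Fin.ext_iff] at h
    simp only at h
    omega
  · rw [insVertex_apply_pred _ _ _ hp, Cell.e.injEq, Fin.ext_iff]
    simp only
    omega

theorem rightAtt_insVertex_iff {p : Fin (k + 1)} {m : Fin n} {f : Fin k → Fin n} :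
    RightAtt (insVertex p m f) p m ↔ ∃ hp : (p : ℕ) < k, f ⟨p, hp⟩ = m := by
  refine ⟨fun ⟨hp, h⟩ => ⟨by omega, ?_⟩, fun ⟨hp, h⟩ => ⟨by omega, ?_⟩⟩
  · rwa [insVertex_apply_succ, Cell.e.injEq] at h
  · rw [insVertex_apply_succ, h]

theorem Adm.unique {x : Fin k → Cell n} {p p' : Fin k} {m m' : Fin n}
    (h : Adm x p m) (h' : Adm x p' m') : p = p' ∧ m = m' := by
  obtain rfl : p = p' := by
    by_contra hne
    obtain ⟨i, hi, -⟩ := h.2.1 p' (Ne.symm hne)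
    rw [h'.1] at hi
    cases hi
  exact ⟨rfl, Cell.v.inj (h.1.symm.trans h'.1)⟩

theorem exists_adm_singlyAtt_iff {x : Fin k → Cell n} :
    (∃ p m, Adm x p m ∧ SinglyAtt x p m) ↔
      Xor (∃ p m, Adm x p m ∧ LeftAtt x p m) (∃ p m, Adm x p m ∧ RightAtt x p m) := by
  constructor
  · rintro ⟨p, m, h, ⟨hl, hr⟩ | ⟨hl, hr⟩⟩
    · refine Or.inl ⟨⟨p, m, h, hl⟩, fun ⟨p', m', h', hr'⟩ => ?_⟩
      obtain ⟨rfl, rfl⟩ := h'.unique h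
      exact hr hr'
    · refine Or.inr ⟨⟨p, m, h, hr⟩, fun ⟨p', m', h', hl'⟩ => ?_⟩
      obtain ⟨rfl, rfl⟩ := h'.unique h
      exact hl hl'
  · rintro (⟨⟨p, m, h, hl⟩, hr⟩ | ⟨⟨p, m, h, hr⟩, hl⟩)
    · exact ⟨p, m, h, Or.inl ⟨hl, fun hr' => hr ⟨p, m, h, hr'⟩⟩⟩
    · exact ⟨p, m, h, Or.inr ⟨fun hl' => hl ⟨p, m, h, hl'⟩, hr⟩⟩

theorem splice_eq_insertNth_castSucc (j : Fin k) (x : Fin k → Cell n) (y : Fin 2 → Cell n) :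
    splice (k + 1) j x y = Fin.insertNth j.castSucc (y 0) (Function.update x j (y 1)) := by
  funext q
  rcases Fin.eq_self_or_eq_succAbove j.castSucc q with rfl | ⟨i, rfl⟩
  · simp [splice]
  · rw [Fin.insertNth_apply_succAbove]
    rcases lt_trichotomy i j with h | rfl | h
    · rw [Function.update_of_ne h.ne, Fin.succAbove_of_castSucc_lt _ _ (by simpa using h)]
      simp [splice, Fin.lt_def.1 h]
    · simp [splice]
    · rw [Function.update_of_ne h.ne', Fin.succAbove_of_le_castSucc _ _ (by simpa using h.le)]
      have := Fin.lt_def.1 h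
      simp only [splice, Fin.val_succ]
      rw [dif_neg (by omega), dif_neg (by omega), dif_pos (by omega)]
      congr 1

theorem splice_eq_insertNth_succ (j : Fin k) (x : Fin k → Cell n) (y : Fin 2 → Cell n) :
    splice (k + 1) j x y = Fin.insertNth j.succ (y 1) (Function.update x j (y 0)) := by
  funext q
  rcases Fin.eq_self_or_eq_succAbove j.succ q with rfl | ⟨i, rfl⟩
  · simp [splice]
  · rw [Fin.insertNth_apply_succAbove]
    rcases lt_trichotomy i j with h | rfl | h
    · rw [Function.update_of_ne h.ne, Fin.succAbove_of_castSucc_lt _ _ (by simpa using h.le)]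
      simp [splice, Fin.lt_def.1 h]
    · simp [splice]
    · rw [Function.update_of_ne h.ne', Fin.succAbove_of_le_castSucc _ _ (by simpa using h)]
      have := Fin.lt_def.1 h
      simp only [splice, Fin.val_succ]
      rw [dif_neg (by omega), dif_neg (by omega), dif_pos (by omega)]
      congr 1

abbrev IncEdges (n k : ℕ) : Type :=
  {f : Fin k → Fin n // StrictMono f ∧ ∀ i, (f i : ℕ) + 1 < n}

noncomputable instance (n k : ℕ) : Fintype (IncEdges n k) :=
  Fintype.ofFinite _

-- The two terms of `(1^{⊗j} ⊗ Δ₂ ⊗ 1^{⊗(k-1-j)})(e_f)`, coming from `v_{f j} ⊗ e_{f j}` and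
-- `e_{f j} ⊗ v_{f j + 1}` respectively.
def attachRight (j : Fin k) (f : IncEdges n k) : Fin (k + 1) → Cell n :=
  insVertex j.castSucc (f.1 j) f.1

def attachLeft (j : Fin k) (f : IncEdges n k) : Fin (k + 1) → Cell n :=
  insVertex j.succ ⟨f.1 j + 1, f.2.2 j⟩ f.1

theorem attachRight_injective2 : Function.Injective2 (attachRight (n := n) (k := k)) := by
  intro j j' f f' h
  obtain ⟨hj, -, hf⟩ := insVertex_inj.1 h
  exact ⟨Fin.castSucc_injective _ hj, Subtype.ext hf⟩

theorem attachLeft_injective2 : Function.Injective2 (attachLeft (n := n) (k := k)) := by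
  intro j j' f f' h
  obtain ⟨hj, -, hf⟩ := insVertex_inj.1 h
  exact ⟨Fin.succ_injective _ hj, Subtype.ext hf⟩

theorem exists_attachRight_eq_iff {x : Fin (k + 1) → Cell n} :
    (∃ j f, attachRight j f = x) ↔ ∃ p m, Adm x p m ∧ RightAtt x p m := by
  constructor
  · rintro ⟨j, ⟨f, hmono, hlt⟩, rfl⟩
    refine ⟨_, _, adm_insVertex_iff.2 ⟨hlt, hmono, fun hp => hmono ?_, fun hp => le_rfl⟩,
      rightAtt_insVertex_iff.2 ⟨j.isLt, rfl⟩⟩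
    simp only [Fin.lt_def, Fin.val_castSucc] at hp ⊢
    omega
  · rintro ⟨p, m, hadm, hright⟩
    obtain ⟨f, rfl⟩ := hadm.exists_eq_insVertex
    obtain ⟨hlt, hmono, -, -⟩ := adm_insVertex_iff.1 hadm
    obtain ⟨hp, rfl⟩ := rightAtt_insVertex_iff.1 hright
    exact ⟨⟨p, hp⟩, ⟨f, hmono, hlt⟩, rfl⟩

theorem exists_attachLeft_eq_iff {x : Fin (k + 1) → Cell n} :
    (∃ j f, attachLeft j f = x) ↔ ∃ p m, Adm x p m ∧ LeftAtt x p m := by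
  constructor
  · rintro ⟨j, ⟨f, hmono, hlt⟩, rfl⟩
    refine ⟨_, _, adm_insVertex_iff.2 ⟨hlt, hmono, fun hp => ?_, fun hp => ?_⟩,
      leftAtt_insVertex_iff.2 ⟨by simp, rfl⟩⟩
    · exact Nat.lt_succ_self _
    · exact hmono (Fin.lt_def.2 (Nat.lt_succ_self _))
  · rintro ⟨p, m, hadm, hleft⟩
    obtain ⟨f, rfl⟩ := hadm.exists_eq_insVertex
    obtain ⟨hlt, hmono, -, -⟩ := adm_insVertex_iff.1 hadm
    obtain ⟨hp, hm⟩ := leftAtt_insVertex_iff.1 hleft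
    refine ⟨⟨p - 1, by omega⟩, ⟨f, hmono, hlt⟩, ?_⟩
    rw [attachLeft, insVertex_inj]
    exact ⟨Fin.ext (by simp only [Fin.val_succ]; omega), Fin.ext hm, rfl⟩

section Expansion

variable {R : Type} [CommRing R]

theorem deltaB_F_of_ne_two (hk : k ≠ 2) : DeltaB R n k Cell.F = esum R n k := by
  simp [DeltaB, hk]

theorem esum_eq_sum_incEdges :
    esum R n k = ∑ f : IncEdges n k, bt R fun i => Cell.e (f.1 i) := by
  rw [esum, ← Finset.sum_filter]
  exact Finset.sum_subtype _ (by simp [StrictMono]) _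

theorem opp_zero_bt {l m j a : ℕ} (g : Cell n → Tens R n j) (y : Fin l → Cell n) (ha : a < l) :
    opp R n l m j a 0 g (bt R y) = Finsupp.mapDomain (splice m a y) (g (y ⟨a, ha⟩)) := by
  simp [opp, lext, bt, sgn, ha]

theorem opp_deltaTwo_bt_incEdges (j : Fin k) (f : IncEdges n k) :
    opp R n k (k + 1) 2 j 0 (DeltaB R n 2) (bt R fun i => Cell.e (f.1 i)) =
      bt R (attachRight j f) + bt R (attachLeft j f) := by
  rw [opp_zero_bt _ _ j.isLt]
  simp only [attachRight, attachLeft, DeltaB, f.2.2 j, reduceIte, reduceDIte, bt,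
    Finsupp.mapDomain_add, Finsupp.mapDomain_single]
  congr 2
  · rw [splice_eq_insertNth_castSucc]
    simp [insVertex]
  · rw [splice_eq_insertNth_succ]
    simp [insVertex]

theorem sum_opp_deltaTwo_deltaB_F (hk : k ≠ 2) :
    ∑ j ∈ Finset.range k, opp R n k (k + 1) 2 j 0 (DeltaB R n 2) (DeltaB R n k Cell.F) =
      ∑ j : Fin k, ∑ f : IncEdges n k, (bt R (attachRight j f) + bt R (attachLeft j f)) := by
  rw [Finset.sum_range, deltaB_F_of_ne_two hk, esum_eq_sum_incEdges]
  simp only [map_sum, opp_deltaTwo_bt_incEdges]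

open Classical in
theorem sum_attach_apply (x : Fin (k + 1) → Cell n) :
    (∑ j : Fin k, ∑ f : IncEdges n k, (bt R (attachRight j f) + bt R (attachLeft j f))) x =
      (if ∃ p m, Adm x p m ∧ RightAtt x p m then 1 else 0) +
        (if ∃ p m, Adm x p m ∧ LeftAtt x p m then 1 else 0) := by
  simp only [Finsupp.finsetSum_apply, Finsupp.add_apply, bt, Finsupp.single_apply,
    Finset.sum_add_distrib]
  rw [attachRight_injective2.sum_sum_boole_eq_ite_exists,
    attachLeft_injective2.sum_sum_boole_eq_ite_exists]
  simp only [exists_attachRight_eq_iff, exists_attachLeft_eq_iff]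

end Expansion

end Polygon

theorem D2_Dk1_characterization_general (n k : ℕ) (hk : 3 < k) :
    ∀ x : Fin k → Cell n,
      (∑ j ∈ Finset.range (k - 1),
          (opp (ZMod 2) n (k - 1) k 2 j 0 (DeltaB (ZMod 2) n 2))
            (DeltaB (ZMod 2) n (k - 1) Cell.F)) x = 1 ↔
        ∃ (p : Fin k) (m : Fin n), Adm x p m ∧ SinglyAtt x p m := by
  obtain ⟨k, rfl⟩ : ∃ k', k = k' + 1 := ⟨k - 1, by omega⟩
  intro x
  rw [Nat.add_sub_cancel, sum_opp_deltaTwo_deltaB_F (by omega), sum_attach_apply, add_comm,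
    ZMod.boole_add_boole_eq_one_iff, exists_adm_singlyAtt_iff]

/-- Over `ℤ/2ℤ`, for `3 < k ≤ n`,
`Σ_{j=0}^{k-2} (1^{⊗j} ⊗ Δ₂ ⊗ 1^{⊗(k-2-j)})(Δ_{k-1}(P))` is exactly the sum (each summand
with coefficient 1) of the admissible basis tensors of `C^{⊗k}` that are singly attached:
every doubly attached term cancels and no unattached term occurs. -/
theorem D2_Dk1_characterization (n k : ℕ) (hn : 3 ≤ n) (hk : 3 < k) (hkn : k ≤ n) :
    ∀ x : Fin k → Cell n,
      (∑ j ∈ Finset.range (k - 1),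
          (opp (ZMod 2) n (k - 1) k 2 j 0 (DeltaB (ZMod 2) n 2))
            (DeltaB (ZMod 2) n (k - 1) Cell.F)) x = 1 ↔
        ∃ (p : Fin k) (m : Fin n), Adm x p m ∧ SinglyAtt x p m :=
  D2_Dk1_characterization_general n k hk
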